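/- If T is an essentially small triangulated category and the Grothendieck group K_0 of its idempotent completion T~ is trivial, then the inclusion T → T~ is an equivalence, i.e., T is idempotent complete. -/

import Mathlib

open CategoryTheory Limits ZeroObject Pretriangulated

universe w v u v' u' v'' u''

namespace Paper

section K0

variable (T : Type u) [Category.{v} T] [HasZeroObject T] [Preadditive T]
  [HasShift T ℤ] [∀ n : ℤ, (shiftFunctor T n).Additive] [Pretriangulated T]

/-- The generating relations of the Grothendieck group of a pretriangulated category:
for every distinguished triangle `X ⟶ Y ⟶ Z ⟶ X⟦1⟧`, we impose `[Y] = [X] + [Z]`. -/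
def K0Rels : Set (FreeAbelianGroup (Quotient (isIsomorphicSetoid T))) :=
  { x | ∃ Tr : Triangle T, (Tr ∈ distTriang T) ∧
      x = FreeAbelianGroup.of (Quotient.mk (isIsomorphicSetoid T) Tr.obj₂) -
          FreeAbelianGroup.of (Quotient.mk (isIsomorphicSetoid T) Tr.obj₁) -
          FreeAbelianGroup.of (Quotient.mk (isIsomorphicSetoid T) Tr.obj₃) }

/-- The Grothendieck group `K₀` of a pretriangulated category: the free abelian group
on isomorphism classes of objects, modulo the relations coming from distinguished
triangles. -/
def K0 : Type u :=
  FreeAbelianGroup (Quotient (isIsomorphicSetoid T)) ⧸ AddSubgroup.closure (K0Rels T)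

instance : AddCommGroup (K0 T) :=
  inferInstanceAs (AddCommGroup (_ ⧸ AddSubgroup.closure (K0Rels T)))

variable {T}
variable {T' : Type u'} [Category.{v'} T'] [HasZeroObject T'] [Preadditive T']
  [HasShift T' ℤ] [∀ n : ℤ, (shiftFunctor T' n).Additive] [Pretriangulated T']

/-- The homomorphism `K₀(T) → K₀(T')` induced by a triangulated functor. -/
noncomputable def K0Map (F : T ⥤ T') [F.CommShift ℤ] [F.IsTriangulated] :
    K0 T →+ K0 T' :=
  QuotientAddGroup.map _ _
    (FreeAbelianGroup.map
      (Quotient.map F.obj fun _ _ h => h.elim fun e => ⟨F.mapIso e⟩))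
    (by
      refine (AddSubgroup.closure_le _).2 ?_
      rintro x ⟨Tr, hTr, rfl⟩
      simp only [SetLike.mem_coe, AddSubgroup.mem_comap]
      refine AddSubgroup.subset_closure
        (⟨F.mapTriangle.obj Tr, F.map_distinguished _ hTr, ?_⟩ : _ ∈ K0Rels T')
      simp [map_sub, FreeAbelianGroup.map_of_apply, Quotient.map_mk])

/-- `ι : T ⥤ T'` exhibits `T'` as the idempotent completion of `T` : it is a fully
faithful functor into an idempotent complete category such that every object of `T'`
is a direct summand (retract) of an object coming from `T`. -/
structure IsIdempotentCompletion {A : Type u} [Category.{v} A] {A' : Type u'}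
    [Category.{v'} A'] (ι : A ⥤ A') : Prop where
  full : ι.Full
  faithful : ι.Faithful
  complete : IsIdempotentComplete A'
  dense : ∀ Y : A', ∃ (X : A) (s : Y ⟶ ι.obj X) (r : ι.obj X ⟶ Y), s ≫ r = 𝟙 Y

end K0

end Paper

/-!
Let `A` be the essential image of `T` in `T'`: a triangulated subcategory of which every object
of `T'` is a direct summand. Call `Y` and `Y'` stably isomorphic if `Y ⊞ a ≅ Y' ⊞ b` for some
`a, b ∈ A`. The stable classes form an abelian group under `⊞`, with `-[Y] = [Y⟦1⟧]`, in which
`[Y] = [X] + [Z]` for every distinguished triangle `X → Y → Z → X⟦1⟧` (add complements of `X`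
and `Z` from `A` to the triangle). So `Y ↦ [Y]` factors through `K₀(T') = 0`, whence
`Y ⊞ a ≅ 0 ⊞ b` with `a, b ∈ A`, and `Y` is in `A` as the cone of `a → Y ⊞ a`.
-/

namespace Paper.K0

variable {C : Type*} [Category C] [HasZeroObject C] [Preadditive C]
  [HasShift C ℤ] [∀ n : ℤ, (shiftFunctor C n).Additive] [Pretriangulated C]

def of (X : C) : K0 C :=
  QuotientAddGroup.mk (FreeAbelianGroup.of (Quotient.mk (isIsomorphicSetoid C) X))

noncomputable def lift {G : Type*} [AddCommGroup G] (f : C → G)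
    (hf_iso : ∀ {X Y : C}, (X ≅ Y) → f X = f Y)
    (hf_dist : ∀ T ∈ distTriang C, f T.obj₂ = f T.obj₁ + f T.obj₃) : K0 C →+ G :=
  QuotientAddGroup.lift _
    (FreeAbelianGroup.lift (Quotient.lift f fun _ _ ⟨e⟩ => hf_iso e))
    ((AddSubgroup.closure_le _).2 (by
      rintro _ ⟨T, hT, rfl⟩
      simp [hf_dist T hT]))

lemma lift_of {G : Type*} [AddCommGroup G] (f : C → G)
    (hf_iso : ∀ {X Y : C}, (X ≅ Y) → f X = f Y)
    (hf_dist : ∀ T ∈ distTriang C, f T.obj₂ = f T.obj₁ + f T.obj₃) (X : C) :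
    lift f hf_iso hf_dist (of X) = f X :=
  (QuotientAddGroup.lift_mk _ _ _).trans (FreeAbelianGroup.lift_apply_of _ _)

end Paper.K0

namespace CategoryTheory

namespace Limits

variable {C : Type*} [Category C] [Preadditive C] [HasBinaryBiproducts C]

noncomputable def biprod.middleSwap (W X Y Z : C) : (W ⊞ X) ⊞ (Y ⊞ Z) ≅ (W ⊞ Y) ⊞ (X ⊞ Z) where
  hom := biprod.lift (biprod.map biprod.fst biprod.fst) (biprod.map biprod.snd biprod.snd)
  inv := biprod.lift (biprod.map biprod.fst biprod.fst) (biprod.map biprod.snd biprod.snd)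

noncomputable def piBoolIsoBiprod (f : Bool → C) [HasProduct f] : ∏ᶜ f ≅ f true ⊞ f false where
  hom := biprod.lift (Pi.π f true) (Pi.π f false)
  inv := Pi.lift fun | true => biprod.fst | false => biprod.snd
  hom_inv_id := Pi.hom_ext _ _ fun | true => by simp | false => by simp

end Limits

lemma IsIdempotentComplete.exists_iso_biprod {C : Type*} [Category C] [Preadditive C]
    [HasBinaryBiproducts C] [IsIdempotentComplete C] {Y M : C} (s : Y ⟶ M) (r : M ⟶ Y)
    (hsr : s ≫ r = 𝟙 Y) : ∃ Z : C, Nonempty (M ≅ Y ⊞ Z) := by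
  obtain ⟨Z, i, e, hie, hei⟩ := IsIdempotentComplete.idempotents_split M (𝟙 M - r ≫ s) (by
    simp only [Preadditive.comp_sub, Preadditive.sub_comp, Category.comp_id,
      Category.id_comp, Category.assoc, reassoc_of% hsr]
    abel)
  have : IsSplitMono i := IsSplitMono.mk' ⟨e, hie⟩
  have : IsSplitMono s := IsSplitMono.mk' ⟨r, hsr⟩
  have hse : s ≫ e = 0 := by
    rw [← cancel_mono i]
    simp only [Category.assoc, hei, zero_comp, Preadditive.comp_sub, Category.comp_id,
      reassoc_of% hsr, sub_self]
  have hir : i ≫ r = 0 := by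
    have hrs : r ≫ s = 𝟙 M - e ≫ i := by rw [hei]; abel
    rw [← cancel_mono s, Category.assoc, hrs]
    simp [reassoc_of% hie]
  refine ⟨Z, ⟨⟨biprod.lift r e, biprod.desc s i, ?_, ?_⟩⟩⟩
  · rw [biprod.lift_desc, hei]
    abel
  · ext <;> simp [hsr, hse, hir, hie]

end CategoryTheory

namespace CategoryTheory.ObjectProperty

section Biproducts

variable {C : Type*} [Category C] [Preadditive C] [HasBinaryBiproducts C] (P : ObjectProperty C)

/-- Density in Thomason's sense. -/
class IsDense : Prop where
  exists_prop_biprod (Y : C) : ∃ Z : C, P (Y ⊞ Z)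

def StablyIso (Y Y' : C) : Prop :=
  ∃ A B : C, P A ∧ P B ∧ Nonempty (Y ⊞ A ≅ Y' ⊞ B)

namespace StablyIso

variable {P}

lemma symm {Y Y' : C} (h : P.StablyIso Y Y') : P.StablyIso Y' Y :=
  let ⟨A, B, hA, hB, ⟨e⟩⟩ := h
  ⟨B, A, hB, hA, ⟨e.symm⟩⟩

end StablyIso

end Biproducts

section Pretriangulated

variable {C : Type*} [Category C] [HasZeroObject C] [Preadditive C]
  [HasShift C ℤ] [∀ n : ℤ, (shiftFunctor C n).Additive] [Pretriangulated C]
  (P : ObjectProperty C)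

section ClosedUnderIsomorphisms

variable [P.IsClosedUnderIsomorphisms]

lemma prop_biprod_of_isTriangulatedClosed₂ [P.IsTriangulatedClosed₂] {X Y : C}
    (hX : P X) (hY : P Y) : P (X ⊞ Y) :=
  P.ext_of_isTriangulatedClosed₂ _ (binaryBiproductTriangle_distinguished X Y) hX hY

lemma prop_of_prop_biprod [P.IsTriangulatedClosed₃] {X Y : C} (hXY : P (X ⊞ Y)) (hY : P Y) :
    P X :=
  P.ext_of_isTriangulatedClosed₃ _ (binaryBiproductTriangle_distinguished Y X) hY
    (P.prop_of_iso (biprod.braiding X Y) hXY)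

/-- The direct sum of `T` with the split triangle `X₁ → X₁ ⊞ X₃ → X₃` is distinguished. -/
lemma prop_obj₂_biprod_of_distinguished [P.IsTriangulatedClosed₂] (T : Triangle C)
    (hT : T ∈ distTriang C) {X₁ X₃ : C} (h₁ : P (T.obj₁ ⊞ X₁)) (h₃ : P (T.obj₃ ⊞ X₃)) :
    P (T.obj₂ ⊞ (X₁ ⊞ X₃)) := by
  let S : Bool → Triangle C := fun | true => T | false => binaryBiproductTriangle X₁ X₃
  have hS : productTriangle S ∈ distTriang C :=
    productTriangle_distinguished S fun
      | true => hT
      | false => binaryBiproductTriangle_distinguished X₁ X₃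
  refine P.prop_of_iso (piBoolIsoBiprod fun j => (S j).obj₂) ?_
  exact P.ext_of_isTriangulatedClosed₂ _ hS
    (P.prop_of_iso (piBoolIsoBiprod fun j => (S j).obj₁).symm h₁)
    (P.prop_of_iso (piBoolIsoBiprod fun j => (S j).obj₃).symm h₃)

end ClosedUnderIsomorphisms

namespace StablyIso

variable {P}

lemma shift [P.IsStableUnderShift ℤ] {Y Y' : C} (h : P.StablyIso Y Y') (n : ℤ) :
    P.StablyIso (Y⟦n⟧) (Y'⟦n⟧) := by
  have : PreservesBinaryBiproducts (shiftFunctor C n) :=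
    preservesBinaryBiproducts_of_preservesBiproducts _
  obtain ⟨A, B, hA, hB, ⟨e⟩⟩ := h
  exact ⟨A⟦n⟧, B⟦n⟧, P.le_shift n A hA, P.le_shift n B hB,
    ⟨((shiftFunctor C n).mapBiprod Y A).symm ≪≫ (shiftFunctor C n).mapIso e ≪≫
      (shiftFunctor C n).mapBiprod Y' B⟩⟩

variable [P.IsTriangulated] [P.IsClosedUnderIsomorphisms]

lemma of_iso {Y Y' : C} (e : Y ≅ Y') : P.StablyIso Y Y' :=
  ⟨0, 0, P.prop_zero, P.prop_zero, ⟨biprod.mapIso e (Iso.refl 0)⟩⟩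

lemma biprod {Y Y' Z Z' : C} (hY : P.StablyIso Y Y') (hZ : P.StablyIso Z Z') :
    P.StablyIso (Y ⊞ Z) (Y' ⊞ Z') := by
  obtain ⟨A, B, hA, hB, ⟨e⟩⟩ := hY
  obtain ⟨A', B', hA', hB', ⟨e'⟩⟩ := hZ
  exact ⟨A ⊞ A', B ⊞ B', P.prop_biprod_of_isTriangulatedClosed₂ hA hA',
    P.prop_biprod_of_isTriangulatedClosed₂ hB hB',
    ⟨biprod.middleSwap _ _ _ _ ≪≫ biprod.mapIso e e' ≪≫ biprod.middleSwap _ _ _ _⟩⟩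

lemma trans {X Y Z : C} (h₁ : P.StablyIso X Y) (h₂ : P.StablyIso Y Z) : P.StablyIso X Z := by
  obtain ⟨A, B, hA, hB, ⟨e⟩⟩ := h₁
  obtain ⟨A', B', hA', hB', ⟨e'⟩⟩ := h₂
  refine ⟨A ⊞ A', B' ⊞ B, P.prop_biprod_of_isTriangulatedClosed₂ hA hA',
    P.prop_biprod_of_isTriangulatedClosed₂ hB' hB, ⟨?_⟩⟩
  calc X ⊞ (A ⊞ A') ≅ (X ⊞ A) ⊞ A' := (biprod.associator _ _ _).symm
    _ ≅ (Y ⊞ B) ⊞ A' := biprod.mapIso e (Iso.refl _)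
    _ ≅ (Y ⊞ A') ⊞ B := biprod.associator _ _ _ ≪≫ biprod.mapIso (Iso.refl _)
          (biprod.braiding _ _) ≪≫ (biprod.associator _ _ _).symm
    _ ≅ (Z ⊞ B') ⊞ B := biprod.mapIso e' (Iso.refl _)
    _ ≅ Z ⊞ (B' ⊞ B) := biprod.associator _ _ _

end StablyIso

variable [P.IsTriangulated] [P.IsClosedUnderIsomorphisms]

lemma prop_of_stablyIso_zero {Y : C} (h : P.StablyIso Y 0) : P Y := by
  obtain ⟨A, B, hA, hB, ⟨e⟩⟩ := h
  exact P.prop_of_prop_biprod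
    (P.prop_of_iso (e ≪≫ biprod.braiding _ _ ≪≫ (isoBiprodZero (isZero_zero C)).symm).symm hB) hA

lemma stablyIso_obj₂_biprod [P.IsDense] (T : Triangle C) (hT : T ∈ distTriang C) :
    P.StablyIso T.obj₂ (T.obj₁ ⊞ T.obj₃) := by
  obtain ⟨X₁, h₁⟩ := IsDense.exists_prop_biprod (P := P) T.obj₁
  obtain ⟨X₃, h₃⟩ := IsDense.exists_prop_biprod (P := P) T.obj₃
  refine ⟨(T.obj₁ ⊞ T.obj₃) ⊞ (X₁ ⊞ X₃), T.obj₂ ⊞ (X₁ ⊞ X₃),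
    P.prop_of_iso (biprod.middleSwap _ _ _ _)
      (P.prop_biprod_of_isTriangulatedClosed₂ h₁ h₃),
    P.prop_obj₂_biprod_of_distinguished T hT h₁ h₃, ⟨?_⟩⟩
  exact (biprod.associator _ _ _).symm ≪≫ biprod.mapIso (biprod.braiding _ _) (Iso.refl _) ≪≫
    biprod.associator _ _ _

def stablyIsoSetoid : Setoid C :=
  ⟨P.StablyIso, ⟨fun _ => .of_iso (Iso.refl _), .symm, .trans⟩⟩

abbrev StableClasses : Type _ := _root_.Quotient P.stablyIsoSetoid

namespace StableClasses

variable {P}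

noncomputable instance : Zero P.StableClasses := ⟨_root_.Quotient.mk _ 0⟩

noncomputable instance : Add P.StableClasses :=
  ⟨_root_.Quotient.map₂ (· ⊞ ·) fun _ _ h₁ _ _ h₂ => StablyIso.biprod h₁ h₂⟩

noncomputable instance : Neg P.StableClasses :=
  ⟨_root_.Quotient.map (·⟦(1 : ℤ)⟧) fun _ _ h => StablyIso.shift h 1⟩

/-- `[Y⟦1⟧] + [Y] = 0` is the additivity on the rotated contractible triangle `Y → 0 → Y⟦1⟧`. -/
noncomputable instance [P.IsDense] : AddCommGroup P.StableClasses where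
  add_assoc := by
    rintro ⟨X⟩ ⟨Y⟩ ⟨Z⟩
    exact _root_.Quotient.sound (.of_iso (biprod.associator X Y Z))
  zero_add := by
    rintro ⟨Y⟩
    exact _root_.Quotient.sound (.of_iso (isoZeroBiprod (isZero_zero C)).symm)
  add_zero := by
    rintro ⟨Y⟩
    exact _root_.Quotient.sound (.of_iso (isoBiprodZero (isZero_zero C)).symm)
  add_comm := by
    rintro ⟨X⟩ ⟨Y⟩
    exact _root_.Quotient.sound (.of_iso (biprod.braiding X Y))
  neg_add_cancel := by
    rintro ⟨Y⟩
    exact _root_.Quotient.sound ((P.stablyIso_obj₂_biprod _ (rot_of_distTriang _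
      (contractible_distinguished Y))).trans (.of_iso (biprod.braiding _ _))).symm
  nsmul := nsmulRec
  zsmul := zsmulRec

end StableClasses

noncomputable def toStableClasses [P.IsDense] : Paper.K0 C →+ P.StableClasses :=
  Paper.K0.lift (_root_.Quotient.mk _) (fun e => _root_.Quotient.sound (.of_iso e))
    (fun T hT => _root_.Quotient.sound (P.stablyIso_obj₂_biprod T hT))

lemma toStableClasses_of [P.IsDense] (Y : C) :
    P.toStableClasses (Paper.K0.of Y) = _root_.Quotient.mk _ Y :=
  Paper.K0.lift_of _ (fun e => _root_.Quotient.sound (StablyIso.of_iso e)) _ Y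

lemma prop_of_subsingleton_K0 [P.IsDense] [Subsingleton (Paper.K0 C)] (Y : C) : P Y := by
  have hY := congrArg P.toStableClasses (Subsingleton.elim (Paper.K0.of Y) (Paper.K0.of 0))
  rw [toStableClasses_of, toStableClasses_of] at hY
  exact P.prop_of_stablyIso_zero (_root_.Quotient.exact hY)

end Pretriangulated

end CategoryTheory.ObjectProperty

lemma Paper.IsIdempotentCompletion.isDense_essImage {A A' : Type*} [Category A] [Category A']
    [Preadditive A'] [HasBinaryBiproducts A'] {ι : A ⥤ A'} (hι : Paper.IsIdempotentCompletion ι) :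
    ι.essImage.IsDense where
  exists_prop_biprod Y := by
    have := hι.complete
    obtain ⟨X, s, r, hsr⟩ := hι.dense Y
    obtain ⟨Z, ⟨e⟩⟩ := IsIdempotentComplete.exists_iso_biprod s r hsr
    exact ⟨Z, X, ⟨e⟩⟩

/-- If `T` is an essentially small pretriangulated category and the
Grothendieck group `K₀` of its idempotent completion `T'` is trivial, then the inclusion
`T ⥤ T'` is an equivalence, i.e. `T` is idempotent complete. -/
theorem stmt0 {T : Type u} [Category.{v} T] [HasZeroObject T] [Preadditive T]
    [HasShift T ℤ] [∀ n : ℤ, (shiftFunctor T n).Additive] [Pretriangulated T]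
    [EssentiallySmall.{w} T]
    {T' : Type u'} [Category.{v'} T'] [HasZeroObject T'] [Preadditive T']
    [HasShift T' ℤ] [∀ n : ℤ, (shiftFunctor T' n).Additive] [Pretriangulated T']
    (ι : T ⥤ T') [ι.CommShift ℤ] [ι.IsTriangulated]
    (hι : Paper.IsIdempotentCompletion ι)
    (hK : Subsingleton (Paper.K0 T')) :
    ι.IsEquivalence ∧ IsIdempotentComplete T := by
  have := hι.full
  have := hι.faithful
  have := hι.isDense_essImage
  have : ι.EssSurj := ⟨ι.essImage.prop_of_subsingleton_K0⟩
  have : ι.IsEquivalence := { }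
  exact ⟨this, (Idempotents.isIdempotentComplete_iff_of_equivalence ι.asEquivalence).2 hι.complete⟩
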